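/- arXiv:2501.04360 — 3 statements merged into one kernel-verified Lean document; each statement's English description precedes it below -/
import Mathlib

section
/- Suppose f : [0,1]^d → ℝ has nonpositive divided difference of order p for every p obtained by placing a 2 in one coordinate and 1 in all others, i.e., p = (2,1,…,1), (1,2,1,…,1), …, (1,…,1,2). Then: (i) if 0 ≤ x_1^{(k)} < x_2^{(k)} ≤ x_3^{(k)} ≤ 1 for all k, the divided difference of f of order (1,…,1) at (x_1^{(k)}, x_2^{(k)})_{k} is ≥ its divided difference of order (1,…,1) at (x_1^{(k)}, x_3^{(k)})_{k}; (ii) if 0 ≤ x_1^{(k)} ≤ x_2^{(k)} < x_3^{(k)} ≤ 1 for all k, the divided difference at (x_1^{(k)}, x_3^{(k)})_{k} is ≥ that at (x_2^{(k)}, x_3^{(k)})_{k}; (iii) consequently, if 0 ≤ x_1^{(k)} ≤ y_1^{(k)} ≤ 1 and 0 ≤ x_2^{(k)} ≤ y_2^{(k)} ≤ 1 with x_1^{(k)} < x_2^{(k)} and y_1^{(k)} < y_2^{(k)} for all k, then the divided difference at (x_1^{(k)}, x_2^{(k)})_{k} is ≥ that at (y_1^{(k)}, y_2^{(k)})_{k}.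 -/
open MeasureTheory ProbabilityTheory

noncomputable section

/-- The unit cube `[0,1]^ι` inside `ι → ℝ`. -/
def unitCube (ι : Type*) : Set (ι → ℝ) := Set.univ.pi fun _ => Set.Icc (0 : ℝ) 1

/-- The (tensor-product) divided difference of `f` of order `p` at the points `x`. -/
def mvDivDiff {ι : Type*} [Fintype ι] [DecidableEq ι] (f : (ι → ℝ) → ℝ) (p : ι → ℕ)
    (x : (k : ι) → Fin (p k + 1) → ℝ) : ℝ :=
  ∑ i : (k : ι) → Fin (p k + 1),
    f (fun k => x k (i k)) /
      ∏ k, ∏ j ∈ Finset.univ.erase (i k), (x k (i k) - x k j)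

/-- `F^d_TCP`: total concavity in the sense of Popoviciu, i.e. all divided differences
of order `p ∈ {0,1,2}^d` with `max_k p_k = 2` are nonpositive. -/
def MemTCP (d : ℕ) (f : (Fin d → ℝ) → ℝ) : Prop :=
  ∀ p : Fin d → ℕ, (∀ k, p k ≤ 2) → (∃ k, p k = 2) →
    ∀ x : (k : Fin d) → Fin (p k + 1) → ℝ,
      (∀ k, StrictMono (x k)) → (∀ k j, x k j ∈ Set.Icc (0 : ℝ) 1) →
      mvDivDiff f p x ≤ 0

/-- The collection of subsets `S ⊆ [d]` with `1 ≤ |S| ≤ s`. -/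
def smallSets (d s : ℕ) : Finset (Finset (Fin d)) :=
  Finset.univ.filter fun S => 1 ≤ S.card ∧ S.card ≤ s

/-- The set `[0,1)^{|S|} \ {0}`, viewed inside `Fin d → ℝ` (coordinates in `S`). -/
def tcSupport (d : ℕ) (S : Finset (Fin d)) : Set (Fin d → ℝ) :=
  {t | (∀ j ∈ S, t j ∈ Set.Ico (0 : ℝ) 1) ∧ ∃ j ∈ S, t j ≠ 0}

/-- A representation `(β₀, (β_S), (ν_S))` of a totally concave function:
a constant, coefficients for the multilinear terms, and finite Borel measures
`ν_S` on `[0,1)^{|S|} \ {0}`. -/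
structure TCRep (d : ℕ) where
  β0 : ℝ
  β : Finset (Fin d) → ℝ
  ν : Finset (Fin d) → Measure (Fin d → ℝ)
  finite : ∀ S, IsFiniteMeasure (ν S)
  support : ∀ S, ν S (tcSupport d S)ᶜ = 0

/-- The function represented by `r`, keeping interactions of order at most `s`. -/
def TCRep.toFun {d : ℕ} (s : ℕ) (r : TCRep d) (x : Fin d → ℝ) : ℝ :=
  r.β0 + ∑ S ∈ smallSets d s, r.β S * ∏ j ∈ S, x j
    - ∑ S ∈ smallSets d s, ∫ t, (∏ j ∈ S, max (x j - t j) 0) ∂(r.ν S)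

/-- The total size `V` of the measures in the representation `r`. -/
def TCRep.V {d : ℕ} (s : ℕ) (r : TCRep d) : ℝ :=
  ∑ S ∈ smallSets d s, (r.ν S Set.univ).toReal

/-- Membership in the class `F^{d,s}_TC` of totally concave functions on `[0,1]^d`
with interactions of order at most `s`. -/
def MemTC (d s : ℕ) (f : (Fin d → ℝ) → ℝ) : Prop :=
  ∃ r : TCRep d, ∀ x ∈ unitCube (Fin d), f x = r.toFun s x

/-- Membership in `F^{d,s}_TC` via a representation of total measure size at most `Vbd`. -/
def MemTCV (d s : ℕ) (Vbd : ℝ) (f : (Fin d → ℝ) → ℝ) : Prop :=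
  ∃ r : TCRep d, (∀ x ∈ unitCube (Fin d), f x = r.toFun s x) ∧ r.V s ≤ Vbd

/-- The interaction restriction condition of order `s`. -/
def InteractionRestriction (d s : ℕ) (f : (Fin d → ℝ) → ℝ) : Prop :=
  ∀ S : Finset (Fin d), s < S.card →
    ∀ x y : Fin d → ℝ, (∀ k ∈ S, 0 ≤ x k ∧ x k < y k ∧ y k ≤ 1) →
      ∑ R ∈ S.powerset, (-1 : ℝ) ^ (S.card - R.card) *
        f (fun k => if k ∈ R then y k else if k ∈ S then x k else 0) = 0

/-- The regularity condition at `0` for the subset `S`: the relevant divided differences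
near the origin are bounded above. -/
def RegZero (d : ℕ) (f : (Fin d → ℝ) → ℝ) (S : Finset (Fin d)) : Prop :=
  ∃ M : ℝ, ∀ t : Fin d → ℝ, (∀ k ∈ S, t k ∈ Set.Ioc (0 : ℝ) 1) →
    (∏ k ∈ S, t k)⁻¹ *
      ∑ R ∈ S.powerset, (-1 : ℝ) ^ (S.card - R.card) *
        f (fun k => if k ∈ R then t k else 0) ≤ M

/-- The regularity condition at `1` for the subset `S`: the relevant divided differences
near the far corner are bounded below. -/
def RegOne (d : ℕ) (f : (Fin d → ℝ) → ℝ) (S : Finset (Fin d)) : Prop :=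
  ∃ M : ℝ, ∀ t : Fin d → ℝ, (∀ k ∈ S, t k ∈ Set.Ico (0 : ℝ) 1) →
    M ≤ (∏ k ∈ S, (1 - t k))⁻¹ *
      ∑ R ∈ S.powerset, (-1 : ℝ) ^ (S.card - R.card) *
        f (fun k => if k ∈ R then 1 else if k ∈ S then t k else 0)

/-- Entire monotonicity: all divided differences of order `p ∈ {0,1}^ι \ {0}`
are nonnegative. -/
def EntirelyMonotone {ι : Type*} [Fintype ι] [DecidableEq ι] (g : (ι → ℝ) → ℝ) : Prop :=
  ∀ p : ι → ℕ, (∀ k, p k ≤ 1) → (∃ k, p k = 1) →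
    ∀ x : (k : ι) → Fin (p k + 1) → ℝ,
      (∀ k, StrictMono (x k)) → (∀ k j, x k j ∈ Set.Icc (0 : ℝ) 1) →
      0 ≤ mvDivDiff g p x

/-- Coordinate-wise right-continuity on the unit cube. -/
def CwRightCont {ι : Type*} [DecidableEq ι] (g : (ι → ℝ) → ℝ) : Prop :=
  ∀ x : ι → ℝ, (∀ k, x k ∈ Set.Icc (0 : ℝ) 1) → ∀ k : ι,
    ContinuousWithinAt (fun u => g (Function.update x k u)) (Set.Icc (x k) 1) (x k)

/-- Coordinate-wise left-continuity at points of the cube whose `k`-th coordinate is `1`,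
with respect to that coordinate. -/
def CwLeftContAtOne {ι : Type*} [DecidableEq ι] (g : (ι → ℝ) → ℝ) : Prop :=
  ∀ x : ι → ℝ, (∀ k, x k ∈ Set.Icc (0 : ℝ) 1) → ∀ k : ι, x k = 1 →
    ContinuousWithinAt (fun u => g (Function.update x k u)) (Set.Icc (0 : ℝ) 1) (x k)

/-- `t` belongs to the lattice `L_S` generated by the design points `x`
(extended by `0` in the coordinates outside `S`). -/
def InLattice {d n : ℕ} (x : Fin n → Fin d → ℝ) (S : Finset (Fin d)) (t : Fin d → ℝ) : Prop :=
  (∀ j ∈ S, t j = 0 ∨ ∃ i, t j = x i j) ∧ (∃ j ∈ S, t j ≠ 0) ∧ ∀ j ∉ S, t j = 0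

/-- The finite-dimensional class of functions built from hinge functions with knots in the
lattices `L_S` (nonnegative coefficients on the hinge terms). -/
def MemDiscrete (d s : ℕ) {n : ℕ} (x : Fin n → Fin d → ℝ) (f : (Fin d → ℝ) → ℝ) : Prop :=
  ∃ (β0 : ℝ) (β : Finset (Fin d) → ℝ)
    (T : Finset (Fin d) → Finset (Fin d → ℝ)) (c : Finset (Fin d) → (Fin d → ℝ) → ℝ),
    (∀ S ∈ smallSets d s, ∀ t ∈ T S, InLattice x S t) ∧
    (∀ S ∈ smallSets d s, ∀ t ∈ T S, 0 ≤ c S t) ∧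
    ∀ z ∈ unitCube (Fin d),
      f z = β0 + ∑ S ∈ smallSets d s, β S * ∏ j ∈ S, z j
        - ∑ S ∈ smallSets d s, ∑ t ∈ T S, c S t * ∏ j ∈ S, max (z j - t j) 0

/-- The point of the equally spaced lattice design indexed by `i`. -/
def latticePoint {d : ℕ} (nk : Fin d → ℕ) (i : ∀ k, Fin (nk k)) : Fin d → ℝ :=
  fun k => (i k : ℝ) / (nk k)

/-- `V_design(f)`: the infimum of `V(g)` over all totally concave `g` agreeing with `f`
at the design points. -/
def Vdesign (d : ℕ) {ι : Type*} (pts : ι → Fin d → ℝ) (f : (Fin d → ℝ) → ℝ) : ℝ :=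
  sInf {v : ℝ | ∃ r : TCRep d, (∀ i, r.toFun d (pts i) = f (pts i)) ∧ v = r.V d}

/-- `f` is a continuous rectangular piecewise multi-affine function (interaction order `≤ s`)
with respect to an axis-aligned grid partition of `[0,1]^d` into `m` rectangles. -/
def IsRectPartition (d s : ℕ) (f : (Fin d → ℝ) → ℝ) (m : ℕ) : Prop :=
  ContinuousOn f (unitCube (Fin d)) ∧
  ∃ (mk : Fin d → ℕ) (u : (k : Fin d) → Fin (mk k + 1) → ℝ),
    (∀ k, StrictMono (u k)) ∧ (∀ k, u k 0 = 0) ∧ (∀ k, u k (Fin.last (mk k)) = 1) ∧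
    m = ∏ k, mk k ∧
    ∀ j : (k : Fin d) → Fin (mk k),
      ∃ (c0 : ℝ) (c : Finset (Fin d) → ℝ),
        ∀ x : Fin d → ℝ,
          (∀ k, x k ∈ Set.Icc (u k (j k).castSucc) (u k (j k).succ)) →
          f x = c0 + ∑ S ∈ smallSets d s, c S * ∏ k ∈ S, x k


/-- The divided difference of order `(1,…,1)` at the pairs `(a k, b k)`. -/
def pairDiff {d : ℕ} (f : (Fin d → ℝ) → ℝ) (a b : Fin d → ℝ) : ℝ :=
  mvDivDiff f (fun _ => 1) (fun k => ![a k, b k])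

private lemma prod_split {d : ℕ} {M : Type*} [CommMonoid M] (k0 : Fin d) (g : Fin d → M) :
    ∏ k, g k = g k0 * ∏ k : {k : Fin d // k ≠ k0}, g k.1 := by
  rw [← Finset.mul_prod_erase Finset.univ g (Finset.mem_univ k0)]
  congr 1
  exact Finset.prod_subtype (Finset.univ.erase k0) (by simp) g

private lemma mvDivDiff_split {d : ℕ} (f : (Fin d → ℝ) → ℝ) (p : Fin d → ℕ) (k0 : Fin d)
    (x : (k : Fin d) → Fin (p k + 1) → ℝ) :
    mvDivDiff f p x = ∑ j : (k : {k : Fin d // k ≠ k0}) → Fin (p k.1 + 1),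
      ∑ v : Fin (p k0 + 1),
      f (fun k => if h : k = k0 then x k0 v else x k (j ⟨k, h⟩)) /
        ((∏ m ∈ Finset.univ.erase v, (x k0 v - x k0 m)) *
          ∏ k : {k : Fin d // k ≠ k0}, ∏ m ∈ Finset.univ.erase (j k), (x k.1 (j k) - x k.1 m)) := by
  classical
  rw [mvDivDiff, ← Equiv.sum_comp (Equiv.piSplitAt k0 fun k => Fin (p k + 1)).symm,
    Fintype.sum_prod_type, Finset.sum_comm]
  refine Finset.sum_congr rfl fun j _ => Finset.sum_congr rfl fun v _ => ?_
  have hi : ∀ k, (Equiv.piSplitAt k0 (fun k => Fin (p k + 1))).symm (v, j) k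
      = if h : k = k0 then h.symm.rec v else j ⟨k, h⟩ := fun k => rfl
  have hk0 : (Equiv.piSplitAt k0 (fun k => Fin (p k + 1))).symm (v, j) k0 = v := by
    rw [hi]; simp
  congr 1
  · congr 1
    funext k
    by_cases h : k = k0
    · subst h; rw [hk0]; simp
    · rw [hi]; simp [h]
  · rw [prod_split k0, hk0]
    congr 1
    refine Finset.prod_congr rfl fun k _ => ?_
    have : (Equiv.piSplitAt k0 (fun k => Fin (p k + 1))).symm (v, j) k.1 = j k := by
      rw [hi]; simp [k.2]
    rw [this]

private lemma erase2 {n : ℕ} (hn : n = 2) (u v : ℝ) (g : Fin n → ℝ)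
    (hg : ∀ m, g m = if (m : ℕ) = 0 then u else v) (w : Fin n) :
    ∏ m ∈ Finset.univ.erase w, (g w - g m) = if (w : ℕ) = 0 then u - v else v - u := by
  subst hn
  fin_cases w <;>
    simp [hg, show (Finset.univ.erase (0 : Fin 2)) = {1} from by decide,
      show (Finset.univ.erase (1 : Fin 2)) = {0} from by decide]

private lemma erase3 {n : ℕ} (hn : n = 3) (t1 t2 t3 : ℝ) (g : Fin n → ℝ)
    (hg : ∀ m, g m = if (m : ℕ) = 0 then t1 else if (m : ℕ) = 1 then t2 else t3) (w : Fin n) :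
    ∏ m ∈ Finset.univ.erase w, (g w - g m) =
      if (w : ℕ) = 0 then (t1 - t2) * (t1 - t3)
      else if (w : ℕ) = 1 then (t2 - t1) * (t2 - t3)
      else (t3 - t1) * (t3 - t2) := by
  subst hn
  obtain ⟨wv, hw⟩ := w
  interval_cases wv
  · rw [show (⟨0, hw⟩ : Fin 3) = 0 from rfl,
      show Finset.univ.erase (0 : Fin 3) = {1, 2} from by decide,
      Finset.prod_pair (by decide)]
    simp [hg]
  · rw [show (⟨1, hw⟩ : Fin 3) = 1 from rfl,
      show Finset.univ.erase (1 : Fin 3) = {0, 2} from by decide,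
      Finset.prod_pair (by decide)]
    simp [hg]
  · rw [show (⟨2, hw⟩ : Fin 3) = 2 from rfl,
      show Finset.univ.erase (2 : Fin 3) = {0, 1} from by decide,
      Finset.prod_pair (by decide)]
    simp [hg]

private lemma sum3 {n : ℕ} (hn : n = 3) (g : Fin n → ℝ) :
    ∑ v, g v = g ⟨0, by omega⟩ + g ⟨1, by omega⟩ + g ⟨2, by omega⟩ := by
  subst hn
  rw [Fin.sum_univ_three]
  rfl

private def Qf {d : ℕ} (k0 : Fin d) (a b : Fin d → ℝ)
    (j : {k : Fin d // k ≠ k0} → Fin 2) (s : ℝ) : Fin d → ℝ :=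
  fun k => if h : k = k0 then s else if ((j ⟨k, h⟩) : ℕ) = 0 then a k else b k

private def Cf {d : ℕ} (k0 : Fin d) (a b : Fin d → ℝ)
    (j : {k : Fin d // k ≠ k0} → Fin 2) : ℝ :=
  ∏ k : {k : Fin d // k ≠ k0}, if ((j k) : ℕ) = 0 then a k.1 - b k.1 else b k.1 - a k.1

private lemma pair_closed {d : ℕ} (f : (Fin d → ℝ) → ℝ) (k0 : Fin d) (a b : Fin d → ℝ)
    (s1 s2 : ℝ) :
    pairDiff f (fun k => if k = k0 then s1 else a k) (fun k => if k = k0 then s2 else b k)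
      = ∑ j : {k : Fin d // k ≠ k0} → Fin 2,
          (f (Qf k0 a b j s1) / ((s1 - s2) * Cf k0 a b j)
            + f (Qf k0 a b j s2) / ((s2 - s1) * Cf k0 a b j)) := by
  rw [pairDiff, mvDivDiff_split f _ k0]
  refine Finset.sum_congr rfl fun j _ => ?_
  rw [Fin.sum_univ_two]
  have hg0 : ∀ m : Fin (1+1), ![(if k0 = k0 then s1 else a k0), (if k0 = k0 then s2 else b k0)] m
      = if (m : ℕ) = 0 then s1 else s2 := by
    intro m; fin_cases m <;> simp
  have hgk : ∀ (k : {k : Fin d // k ≠ k0}) (m : Fin (1+1)),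
      ![(if k.1 = k0 then s1 else a k.1), (if k.1 = k0 then s2 else b k.1)] m
        = if (m : ℕ) = 0 then a k.1 else b k.1 := by
    intro k m; fin_cases m <;> simp [k.2]
  have hC : (∏ k : {k : Fin d // k ≠ k0}, ∏ m ∈ Finset.univ.erase (j k),
        (![(if k.1 = k0 then s1 else a k.1), (if k.1 = k0 then s2 else b k.1)] (j k)
          - ![(if k.1 = k0 then s1 else a k.1), (if k.1 = k0 then s2 else b k.1)] m))
        = Cf k0 a b j := by
    refine Finset.prod_congr rfl fun k _ => ?_
    rw [erase2 rfl (a k.1) (b k.1) _ (hgk k) (j k)]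
  have hq1 : (fun k => if h : k = k0
        then ![(if k0 = k0 then s1 else a k0), (if k0 = k0 then s2 else b k0)] 0
        else ![(if k = k0 then s1 else a k), (if k = k0 then s2 else b k)] (j ⟨k, h⟩))
      = Qf k0 a b j s1 := by
    funext k
    by_cases h : k = k0
    · subst h; simp [Qf]
    · simp only [Qf, dif_neg h, if_neg h]
      generalize j ⟨k, h⟩ = m
      fin_cases m <;> simp
  have hq2 : (fun k => if h : k = k0
        then ![(if k0 = k0 then s1 else a k0), (if k0 = k0 then s2 else b k0)] 1
        else ![(if k = k0 then s1 else a k), (if k = k0 then s2 else b k)] (j ⟨k, h⟩))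
      = Qf k0 a b j s2 := by
    funext k
    by_cases h : k = k0
    · subst h; simp [Qf]
    · simp only [Qf, dif_neg h, if_neg h]
      generalize j ⟨k, h⟩ = m
      fin_cases m <;> simp
  rw [hq1, hq2, erase2 rfl s1 s2 _ hg0 0, erase2 rfl s1 s2 _ hg0 1, hC]
  norm_num

private lemma dd_closed {d : ℕ} (f : (Fin d → ℝ) → ℝ) (k0 : Fin d) (a b : Fin d → ℝ)
    (t1 t2 t3 : ℝ) :
    mvDivDiff f (fun k => if k = k0 then 2 else 1)
        (fun k m => if k = k0 then (if (m : ℕ) = 0 then t1 else if (m : ℕ) = 1 then t2 else t3)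
          else if (m : ℕ) = 0 then a k else b k)
      = ∑ j : {k : Fin d // k ≠ k0} → Fin 2,
          (f (Qf k0 a b j t1) / ((t1 - t2) * (t1 - t3) * Cf k0 a b j)
            + f (Qf k0 a b j t2) / ((t2 - t1) * (t2 - t3) * Cf k0 a b j)
            + f (Qf k0 a b j t3) / ((t3 - t1) * (t3 - t2) * Cf k0 a b j)) := by
  have hk0 : ((if k0 = k0 then 2 else 1) + 1) = 3 := by simp
  have hne : ∀ k : {k : Fin d // k ≠ k0}, ((if k.1 = k0 then 2 else 1) + 1) = 2 := by
    intro k; simp [k.2]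
  set τ : ({k : Fin d // k ≠ k0} → Fin 2)
      ≃ ((k : {k : Fin d // k ≠ k0}) → Fin ((if k.1 = k0 then 2 else 1) + 1)) :=
    Equiv.piCongrRight fun k => finCongr (hne k).symm with hτdef
  rw [mvDivDiff_split f _ k0, ← Equiv.sum_comp τ]
  refine Finset.sum_congr rfl fun j _ => ?_
  have hτ : ∀ k, ((τ j k) : ℕ) = ((j k) : ℕ) := by
    intro k; simp [hτdef]
  have hgk0 : ∀ m : Fin ((if k0 = k0 then 2 else 1) + 1),
      (if k0 = k0 then (if (m : ℕ) = 0 then t1 else if (m : ℕ) = 1 then t2 else t3)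
        else (if (m : ℕ) = 0 then a k0 else b k0))
      = if (m : ℕ) = 0 then t1 else if (m : ℕ) = 1 then t2 else t3 := fun m => if_pos rfl
  have hgk : ∀ (k : {k : Fin d // k ≠ k0}) (m : Fin ((if k.1 = k0 then 2 else 1) + 1)),
      (if k.1 = k0 then (if (m : ℕ) = 0 then t1 else if (m : ℕ) = 1 then t2 else t3)
        else (if (m : ℕ) = 0 then a k.1 else b k.1))
      = if (m : ℕ) = 0 then a k.1 else b k.1 := fun k m => if_neg k.2
  have hC : (∏ k : {k : Fin d // k ≠ k0}, ∏ m ∈ Finset.univ.erase (τ j k),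
        ((if k.1 = k0 then (if ((τ j k) : ℕ) = 0 then t1 else if ((τ j k) : ℕ) = 1 then t2 else t3)
          else (if ((τ j k) : ℕ) = 0 then a k.1 else b k.1))
          - (if k.1 = k0 then (if (m : ℕ) = 0 then t1 else if (m : ℕ) = 1 then t2 else t3)
            else (if (m : ℕ) = 0 then a k.1 else b k.1))))
      = Cf k0 a b j := by
    rw [Cf]
    refine Finset.prod_congr rfl fun k _ => ?_
    rw [erase2 (hne k) (a k.1) (b k.1) _ (hgk k) (τ j k), hτ k]
  have hq : ∀ (v : Fin ((if k0 = k0 then 2 else 1) + 1)) (s : ℝ),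
      ((if (v : ℕ) = 0 then t1 else if (v : ℕ) = 1 then t2 else t3) = s) →
      (fun k => if h : k = k0
        then (if k0 = k0 then (if (v : ℕ) = 0 then t1 else if (v : ℕ) = 1 then t2 else t3)
          else (if (v : ℕ) = 0 then a k0 else b k0))
        else (if k = k0 then (if ((τ j ⟨k, h⟩) : ℕ) = 0 then t1
            else if ((τ j ⟨k, h⟩) : ℕ) = 1 then t2 else t3)
          else (if ((τ j ⟨k, h⟩) : ℕ) = 0 then a k else b k)))
      = Qf k0 a b j s := by
    intro v s hs
    funext k
    by_cases h : k = k0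
    · subst h; simp [Qf, ← hs]
    · simp only [Qf, dif_neg h, if_neg h, hτ]
  rw [sum3 hk0]
  rw [hq _ t1 (by norm_num), hq _ t2 (by norm_num), hq _ t3 (by norm_num), hC,
    erase3 hk0 t1 t2 t3 _ hgk0 ⟨0, by omega⟩, erase3 hk0 t1 t2 t3 _ hgk0 ⟨1, by omega⟩,
    erase3 hk0 t1 t2 t3 _ hgk0 ⟨2, by omega⟩]
  norm_num

private lemma Cf_ne {d : ℕ} (k0 : Fin d) {a b : Fin d → ℝ} (hab : ∀ k, k ≠ k0 → a k < b k)
    (j : {k : Fin d // k ≠ k0} → Fin 2) : Cf k0 a b j ≠ 0 := by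
  rw [Cf]
  refine Finset.prod_ne_zero_iff.mpr fun k _ => ?_
  have := hab k.1 k.2
  split
  · exact sub_ne_zero.mpr (ne_of_lt this)
  · exact sub_ne_zero.mpr (ne_of_gt this)

private lemma master {d : ℕ} (f : (Fin d → ℝ) → ℝ) (k0 : Fin d) (a b : Fin d → ℝ)
    (t1 t2 t3 : ℝ) (hab : ∀ k, k ≠ k0 → a k < b k) (h12 : t1 < t2) (h23 : t2 < t3) :
    (pairDiff f (fun k => if k = k0 then t1 else a k) (fun k => if k = k0 then t3 else b k)
        - pairDiff f (fun k => if k = k0 then t1 else a k) (fun k => if k = k0 then t2 else b k)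
      = (t3 - t2) * mvDivDiff f (fun k => if k = k0 then 2 else 1)
          (fun k m => if k = k0 then (if (m : ℕ) = 0 then t1 else if (m : ℕ) = 1 then t2 else t3)
            else if (m : ℕ) = 0 then a k else b k))
    ∧ (pairDiff f (fun k => if k = k0 then t1 else a k) (fun k => if k = k0 then t3 else b k)
        - pairDiff f (fun k => if k = k0 then t2 else a k) (fun k => if k = k0 then t3 else b k)
      = (t1 - t2) * mvDivDiff f (fun k => if k = k0 then 2 else 1)
          (fun k m => if k = k0 then (if (m : ℕ) = 0 then t1 else if (m : ℕ) = 1 then t2 else t3)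
            else if (m : ℕ) = 0 then a k else b k)) := by
  rw [pair_closed f k0 a b t1 t3, pair_closed f k0 a b t1 t2, pair_closed f k0 a b t2 t3,
    dd_closed f k0 a b t1 t2 t3]
  have h12' : t1 - t2 ≠ 0 := sub_ne_zero.mpr (ne_of_lt h12)
  have h23' : t2 - t3 ≠ 0 := sub_ne_zero.mpr (ne_of_lt h23)
  have h13' : t1 - t3 ≠ 0 := sub_ne_zero.mpr (ne_of_lt (h12.trans h23))
  have h21' : t2 - t1 ≠ 0 := sub_ne_zero.mpr (ne_of_gt h12)
  have h32' : t3 - t2 ≠ 0 := sub_ne_zero.mpr (ne_of_gt h23)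
  have h31' : t3 - t1 ≠ 0 := sub_ne_zero.mpr (ne_of_gt (h12.trans h23))
  constructor <;>
  · rw [← Finset.sum_sub_distrib, Finset.mul_sum]
    refine Finset.sum_congr rfl fun j _ => ?_
    have hC := Cf_ne k0 hab j
    field_simp
    ring

private lemma stepUp {d : ℕ} (f : (Fin d → ℝ) → ℝ)
    (h : ∀ k0 : Fin d,
      ∀ x : (k : Fin d) → Fin ((if k = k0 then 2 else 1) + 1) → ℝ,
        (∀ k, StrictMono (x k)) → (∀ k j, x k j ∈ Set.Icc (0 : ℝ) 1) →
        mvDivDiff f (fun k => if k = k0 then 2 else 1) x ≤ 0)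
    (k0 : Fin d) (a b : Fin d → ℝ) (t3 : ℝ) (hab : ∀ k, 0 ≤ a k ∧ a k < b k ∧ b k ≤ 1)
    (h2 : b k0 < t3) (h3 : t3 ≤ 1) :
    pairDiff f a (Function.update b k0 t3) ≤ pairDiff f a b := by
  have hdd : mvDivDiff f (fun k => if k = k0 then 2 else 1)
      (fun k m => if k = k0 then (if (m : ℕ) = 0 then a k0 else if (m : ℕ) = 1 then b k0 else t3)
        else if (m : ℕ) = 0 then a k else b k) ≤ 0 := by
    apply h k0
    · intro k m m' hlt
      have hv : (m : ℕ) < (m' : ℕ) := hlt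
      by_cases hk : k = k0
      · subst hk
        have hb : (m' : ℕ) < 3 := by have := m'.isLt; simpa using this
        have hax := (hab k).2.1
        simp only [if_pos rfl]
        have hc : ((m : ℕ) = 0 ∧ (m' : ℕ) = 1) ∨ ((m : ℕ) = 0 ∧ (m' : ℕ) = 2)
            ∨ ((m : ℕ) = 1 ∧ (m' : ℕ) = 2) := by omega
        rcases hc with ⟨e1, e2⟩ | ⟨e1, e2⟩ | ⟨e1, e2⟩ <;> simp [e1, e2] <;> linarith
      · have hb : (m' : ℕ) < 2 := by have := m'.isLt; simpa [hk] using this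
        simp only [if_neg hk]
        have e1 : (m : ℕ) = 0 := by omega
        have e2 : (m' : ℕ) = 1 := by omega
        simp [e1, e2]
        exact (hab k).2.1
    · intro k m
      have h0 := (hab k).1; have h1 := (hab k).2.1; have hb1 := (hab k).2.2
      have h0' := (hab k0).1; have h1' := (hab k0).2.1; have hb1' := (hab k0).2.2
      simp only [Set.mem_Icc]
      by_cases hk : k = k0
      · rw [if_pos hk]
        have hb : (m : ℕ) < 3 := by have := m.isLt; simp [hk] at this; omega
        have hc : (m : ℕ) = 0 ∨ (m : ℕ) = 1 ∨ (m : ℕ) = 2 := by omega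
        rcases hc with e | e | e <;> simp [e] <;> constructor <;> linarith
      · rw [if_neg hk]
        have hb : (m : ℕ) < 2 := by have := m.isLt; simp [hk] at this; omega
        have hc : (m : ℕ) = 0 ∨ (m : ℕ) = 1 := by omega
        rcases hc with e | e <;> simp [e] <;> constructor <;> linarith
  have hm := (master f k0 a b (a k0) (b k0) t3 (fun k _ => (hab k).2.1) (hab k0).2.1 h2).1
  have e1 : (fun k => if k = k0 then a k0 else a k) = a := by
    funext k; by_cases hk : k = k0
    · rw [if_pos hk, hk]
    · rw [if_neg hk]
  have e2 : (fun k => if k = k0 then b k0 else b k) = b := by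
    funext k; by_cases hk : k = k0
    · rw [if_pos hk, hk]
    · rw [if_neg hk]
  have e3 : (fun k => if k = k0 then t3 else b k) = Function.update b k0 t3 := by
    funext k; rw [Function.update_apply]
  rw [e1, e2, e3] at hm
  have hfac : (t3 - b k0) * mvDivDiff f (fun k => if k = k0 then 2 else 1)
      (fun k m => if k = k0 then (if (m : ℕ) = 0 then a k0 else if (m : ℕ) = 1 then b k0 else t3)
        else if (m : ℕ) = 0 then a k else b k) ≤ 0 :=
    mul_nonpos_iff.mpr (Or.inl ⟨by linarith, hdd⟩)
  linarith

private lemma stepDown {d : ℕ} (f : (Fin d → ℝ) → ℝ)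
    (h : ∀ k0 : Fin d,
      ∀ x : (k : Fin d) → Fin ((if k = k0 then 2 else 1) + 1) → ℝ,
        (∀ k, StrictMono (x k)) → (∀ k j, x k j ∈ Set.Icc (0 : ℝ) 1) →
        mvDivDiff f (fun k => if k = k0 then 2 else 1) x ≤ 0)
    (k0 : Fin d) (a b : Fin d → ℝ) (t0 : ℝ) (hab : ∀ k, 0 ≤ a k ∧ a k < b k ∧ b k ≤ 1)
    (h2 : t0 < a k0) (h3 : 0 ≤ t0) :
    pairDiff f a b ≤ pairDiff f (Function.update a k0 t0) b := by
  have hdd : mvDivDiff f (fun k => if k = k0 then 2 else 1)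
      (fun k m => if k = k0 then (if (m : ℕ) = 0 then t0 else if (m : ℕ) = 1 then a k0 else b k0)
        else if (m : ℕ) = 0 then a k else b k) ≤ 0 := by
    apply h k0
    · intro k m m' hlt
      have hv : (m : ℕ) < (m' : ℕ) := hlt
      by_cases hk : k = k0
      · subst hk
        have hb : (m' : ℕ) < 3 := by have := m'.isLt; simpa using this
        have hax := (hab k).2.1
        simp only [if_pos rfl]
        have hc : ((m : ℕ) = 0 ∧ (m' : ℕ) = 1) ∨ ((m : ℕ) = 0 ∧ (m' : ℕ) = 2)
            ∨ ((m : ℕ) = 1 ∧ (m' : ℕ) = 2) := by omega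
        rcases hc with ⟨e1, e2⟩ | ⟨e1, e2⟩ | ⟨e1, e2⟩ <;> simp [e1, e2] <;> linarith
      · have hb : (m' : ℕ) < 2 := by have := m'.isLt; simpa [hk] using this
        simp only [if_neg hk]
        have e1 : (m : ℕ) = 0 := by omega
        have e2 : (m' : ℕ) = 1 := by omega
        simp [e1, e2]
        exact (hab k).2.1
    · intro k m
      have h0 := (hab k).1; have h1 := (hab k).2.1; have hb1 := (hab k).2.2
      have h0' := (hab k0).1; have h1' := (hab k0).2.1; have hb1' := (hab k0).2.2
      simp only [Set.mem_Icc]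
      by_cases hk : k = k0
      · rw [if_pos hk]
        have hb : (m : ℕ) < 3 := by have := m.isLt; simp [hk] at this; omega
        have hc : (m : ℕ) = 0 ∨ (m : ℕ) = 1 ∨ (m : ℕ) = 2 := by omega
        rcases hc with e | e | e <;> simp [e] <;> constructor <;> linarith
      · rw [if_neg hk]
        have hb : (m : ℕ) < 2 := by have := m.isLt; simp [hk] at this; omega
        have hc : (m : ℕ) = 0 ∨ (m : ℕ) = 1 := by omega
        rcases hc with e | e <;> simp [e] <;> constructor <;> linarith
  have hm := (master f k0 a b t0 (a k0) (b k0) (fun k _ => (hab k).2.1) h2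
    (hab k0).2.1).2
  have e1 : (fun k => if k = k0 then a k0 else a k) = a := by
    funext k; by_cases hk : k = k0
    · rw [if_pos hk, hk]
    · rw [if_neg hk]
  have e2 : (fun k => if k = k0 then b k0 else b k) = b := by
    funext k; by_cases hk : k = k0
    · rw [if_pos hk, hk]
    · rw [if_neg hk]
  have e3 : (fun k => if k = k0 then t0 else a k) = Function.update a k0 t0 := by
    funext k; rw [Function.update_apply]
  rw [e1, e2, e3] at hm
  have hfac : 0 ≤ (t0 - a k0) * mvDivDiff f (fun k => if k = k0 then 2 else 1)
      (fun k m => if k = k0 then (if (m : ℕ) = 0 then t0 else if (m : ℕ) = 1 then a k0 else b k0)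
        else if (m : ℕ) = 0 then a k else b k) :=
    mul_nonneg_iff.mpr (Or.inr ⟨by linarith, hdd⟩)
  linarith

private lemma upAll {d : ℕ} (f : (Fin d → ℝ) → ℝ)
    (h : ∀ k0 : Fin d,
      ∀ x : (k : Fin d) → Fin ((if k = k0 then 2 else 1) + 1) → ℝ,
        (∀ k, StrictMono (x k)) → (∀ k j, x k j ∈ Set.Icc (0 : ℝ) 1) →
        mvDivDiff f (fun k => if k = k0 then 2 else 1) x ≤ 0)
    (x1 x2 x3 : Fin d → ℝ)
    (hx : ∀ k, 0 ≤ x1 k ∧ x1 k < x2 k ∧ x2 k ≤ x3 k ∧ x3 k ≤ 1) :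
    pairDiff f x1 x3 ≤ pairDiff f x1 x2 := by
  have key : ∀ m : ℕ, m ≤ d →
      pairDiff f x1 (fun k => if (k : ℕ) < m then x3 k else x2 k) ≤ pairDiff f x1 x2 := by
    intro m
    induction m with
    | zero =>
      intro _
      have e : (fun k : Fin d => if (k : ℕ) < 0 then x3 k else x2 k) = x2 := by
        funext k; simp
      rw [e]
    | succ m ih =>
      intro hm
      have hmd : m < d := hm
      have ihm := ih (le_of_lt hmd)
      set k0 : Fin d := ⟨m, hmd⟩ with hk0
      have hval : ((k0 : Fin d) : ℕ) = m := rfl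
      by_cases hc : x2 k0 = x3 k0
      · have e : (fun k : Fin d => if (k : ℕ) < m + 1 then x3 k else x2 k)
            = (fun k : Fin d => if (k : ℕ) < m then x3 k else x2 k) := by
          funext k
          by_cases h1 : (k : ℕ) < m
          · rw [if_pos h1, if_pos (by omega)]
          · by_cases h2 : (k : ℕ) = m
            · have hkk : k = k0 := Fin.ext h2
              rw [if_neg h1, if_pos (by omega), hkk, ← hc]
            · rw [if_neg h1, if_neg (by omega)]
        rw [e]; exact ihm
      · have hlt : x2 k0 < x3 k0 := lt_of_le_of_ne (hx k0).2.2.1 hc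
        have hcond : ∀ k, 0 ≤ x1 k ∧ x1 k < (if (k : ℕ) < m then x3 k else x2 k)
            ∧ (if (k : ℕ) < m then x3 k else x2 k) ≤ 1 := by
          intro k; obtain ⟨a1, a2, a3, a4⟩ := hx k
          split_ifs <;> exact ⟨a1, by linarith, by linarith⟩
        have hbm : (if ((k0 : Fin d) : ℕ) < m then x3 k0 else x2 k0) = x2 k0 := by
          rw [if_neg (by omega)]
        have harg : (if ((k0 : Fin d) : ℕ) < m then x3 k0 else x2 k0) < x3 k0 := by
          rw [hbm]; exact hlt
        have key2 := stepUp f h k0 x1 (fun k => if (k : ℕ) < m then x3 k else x2 k) (x3 k0)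
          hcond harg (hx k0).2.2.2
        have e : Function.update (fun k : Fin d => if (k : ℕ) < m then x3 k else x2 k) k0 (x3 k0)
            = (fun k : Fin d => if (k : ℕ) < m + 1 then x3 k else x2 k) := by
          funext k
          rw [Function.update_apply]
          by_cases hkk : k = k0
          · rw [if_pos hkk, hkk, if_pos (by omega)]
          · rw [if_neg hkk]
            have hne : (k : ℕ) ≠ m := fun hh => hkk (Fin.ext hh)
            by_cases h1 : (k : ℕ) < m
            · rw [if_pos h1, if_pos (by omega)]
            · rw [if_neg h1, if_neg (by omega)]
        rw [e] at key2
        exact key2.trans ihm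
  have hd := key d le_rfl
  have e : (fun k : Fin d => if (k : ℕ) < d then x3 k else x2 k) = x3 := by
    funext k; rw [if_pos k.isLt]
  rwa [e] at hd

private lemma downAll {d : ℕ} (f : (Fin d → ℝ) → ℝ)
    (h : ∀ k0 : Fin d,
      ∀ x : (k : Fin d) → Fin ((if k = k0 then 2 else 1) + 1) → ℝ,
        (∀ k, StrictMono (x k)) → (∀ k j, x k j ∈ Set.Icc (0 : ℝ) 1) →
        mvDivDiff f (fun k => if k = k0 then 2 else 1) x ≤ 0)
    (x1 x2 x3 : Fin d → ℝ)
    (hx : ∀ k, 0 ≤ x1 k ∧ x1 k ≤ x2 k ∧ x2 k < x3 k ∧ x3 k ≤ 1) :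
    pairDiff f x2 x3 ≤ pairDiff f x1 x3 := by
  have key : ∀ m : ℕ, m ≤ d →
      pairDiff f x2 x3 ≤ pairDiff f (fun k => if (k : ℕ) < m then x1 k else x2 k) x3 := by
    intro m
    induction m with
    | zero =>
      intro _
      have e : (fun k : Fin d => if (k : ℕ) < 0 then x1 k else x2 k) = x2 := by
        funext k; simp
      rw [e]
    | succ m ih =>
      intro hm
      have hmd : m < d := hm
      have ihm := ih (le_of_lt hmd)
      set k0 : Fin d := ⟨m, hmd⟩ with hk0
      have hval : ((k0 : Fin d) : ℕ) = m := rfl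
      by_cases hc : x1 k0 = x2 k0
      · have e : (fun k : Fin d => if (k : ℕ) < m + 1 then x1 k else x2 k)
            = (fun k : Fin d => if (k : ℕ) < m then x1 k else x2 k) := by
          funext k
          by_cases h1 : (k : ℕ) < m
          · rw [if_pos h1, if_pos (by omega)]
          · by_cases h2 : (k : ℕ) = m
            · have hkk : k = k0 := Fin.ext h2
              rw [if_neg h1, if_pos (by omega), hkk, hc]
            · rw [if_neg h1, if_neg (by omega)]
        rw [e]; exact ihm
      · have hlt : x1 k0 < x2 k0 := lt_of_le_of_ne (hx k0).2.1 hc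
        have hcond : ∀ k : Fin d, 0 ≤ (if (k : ℕ) < m then x1 k else x2 k)
            ∧ (if (k : ℕ) < m then x1 k else x2 k) < x3 k ∧ x3 k ≤ 1 := by
          intro k; obtain ⟨a1, a2, a3, a4⟩ := hx k
          split_ifs <;> exact ⟨by linarith, by linarith, a4⟩
        have ham : (if ((k0 : Fin d) : ℕ) < m then x1 k0 else x2 k0) = x2 k0 := by
          rw [if_neg (by omega)]
        have harg : x1 k0 < (if ((k0 : Fin d) : ℕ) < m then x1 k0 else x2 k0) := by
          rw [ham]; exact hlt
        have key2 := stepDown f h k0 (fun k => if (k : ℕ) < m then x1 k else x2 k) x3 (x1 k0)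
          hcond harg (hx k0).1
        have e : Function.update (fun k : Fin d => if (k : ℕ) < m then x1 k else x2 k) k0 (x1 k0)
            = (fun k : Fin d => if (k : ℕ) < m + 1 then x1 k else x2 k) := by
          funext k
          rw [Function.update_apply]
          by_cases hkk : k = k0
          · rw [if_pos hkk, hkk, if_pos (by omega)]
          · rw [if_neg hkk]
            have hne : (k : ℕ) ≠ m := fun hh => hkk (Fin.ext hh)
            by_cases h1 : (k : ℕ) < m
            · rw [if_pos h1, if_pos (by omega)]
            · rw [if_neg h1, if_neg (by omega)]
        rw [e] at key2
        exact ihm.trans key2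
  have hd := key d le_rfl
  have e : (fun k : Fin d => if (k : ℕ) < d then x1 k else x2 k) = x1 := by
    funext k; rw [if_pos k.isLt]
  rwa [e] at hd


/-- **Lemma (monotonicity of first-order divided differences).**
If all divided differences of `f` of order `(1,…,1)` with a single `2` inserted are
nonpositive, then the divided difference of order `(1,…,1)` is monotone: it decreases
when either endpoint vector increases. -/
theorem pair_divided_difference_monotone (d : ℕ) (f : (Fin d → ℝ) → ℝ)
    (h : ∀ k0 : Fin d,
      ∀ x : (k : Fin d) → Fin ((if k = k0 then 2 else 1) + 1) → ℝ,
        (∀ k, StrictMono (x k)) → (∀ k j, x k j ∈ Set.Icc (0 : ℝ) 1) →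
        mvDivDiff f (fun k => if k = k0 then 2 else 1) x ≤ 0) :
    (∀ x1 x2 x3 : Fin d → ℝ,
      (∀ k, 0 ≤ x1 k ∧ x1 k < x2 k ∧ x2 k ≤ x3 k ∧ x3 k ≤ 1) →
      pairDiff f x1 x3 ≤ pairDiff f x1 x2) ∧
    (∀ x1 x2 x3 : Fin d → ℝ,
      (∀ k, 0 ≤ x1 k ∧ x1 k ≤ x2 k ∧ x2 k < x3 k ∧ x3 k ≤ 1) →
      pairDiff f x2 x3 ≤ pairDiff f x1 x3) ∧
    (∀ x1 x2 y1 y2 : Fin d → ℝ,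
      (∀ k, 0 ≤ x1 k ∧ x1 k ≤ y1 k ∧ y1 k ≤ 1 ∧ 0 ≤ x2 k ∧ x2 k ≤ y2 k ∧ y2 k ≤ 1 ∧
        x1 k < x2 k ∧ y1 k < y2 k) →
      pairDiff f y1 y2 ≤ pairDiff f x1 x2) := by
  refine ⟨fun x1 x2 x3 hx => upAll f h x1 x2 x3 hx,
    fun x1 x2 x3 hx => downAll f h x1 x2 x3 hx,
    fun x1 x2 y1 y2 hx => ?_⟩
  have s1 : pairDiff f y1 y2 ≤ pairDiff f x1 y2 := by
    refine downAll f h x1 y1 y2 fun k => ?_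
    obtain ⟨a1, a2, a3, a4, a5, a6, a7, a8⟩ := hx k
    exact ⟨a1, a2, a8, a6⟩
  have s2 : pairDiff f x1 y2 ≤ pairDiff f x1 x2 := by
    refine upAll f h x1 x2 y2 fun k => ?_
    obtain ⟨a1, a2, a3, a4, a5, a6, a7, a8⟩ := hx k
    exact ⟨a1, a7, a5, a6⟩
  exact s1.trans s2


end
end

section
/- Suppose f ∈ F^d_TCP. Then for every nonempty subset S ⊆ [d], the divided difference of f of order 1_S (1 in coordinates k ∈ S, 0 otherwise) at the points (v_1^{(k)}, v_2^{(k)}) for k ∈ S and v_1^{(k)} for k ∉ S is ≥ the divided difference of f of order 1_S at the points (w_1^{(k)}, w_2^{(k)}) for k ∈ S and w_1^{(k)} for k ∉ S, provided that 0 ≤ v_1^{(k)} ≤ w_1^{(k)} ≤ 1 and 0 ≤ v_2^{(k)} ≤ w_2^{(k)} ≤ 1 with v_1^{(k)} < v_2^{(k)} and w_1^{(k)} < w_2^{(k)} for k ∈ S, and 0 ≤ v_1^{(k)} = w_1^{(k)} ≤ 1 for k ∉ S. -/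
open MeasureTheory ProbabilityTheory

noncomputable section

def psiAux {d : ℕ} (f : (Fin d → ℝ) → ℝ) (k₀ : Fin d)
    (q : {k : Fin d // k ≠ k₀} → ℕ) (z : Fin d → ℕ → ℝ) (u : ℝ) : ℝ :=
  ∑ g : (k : {k : Fin d // k ≠ k₀}) → Fin (q k + 1),
    f (fun k => if h : k = k₀ then u else z k ((g ⟨k, h⟩ : Fin _) : ℕ)) /
      ∏ k : {k : Fin d // k ≠ k₀}, ∏ j' ∈ Finset.univ.erase (g k),
        (z k.1 ((g k : Fin _) : ℕ) - z k.1 (j' : ℕ))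

lemma erase_prod {n : ℕ} (G : ℕ → ℝ) (j : Fin n) :
    ∏ j' ∈ Finset.univ.erase j, G (j' : ℕ) =
    ∏ m ∈ (Finset.range n).erase (j : ℕ), G m := by
  refine Finset.prod_bij (fun j' _ => (j' : ℕ)) ?_ ?_ ?_ ?_
  · intro a ha
    simp only [Finset.mem_erase, Finset.mem_univ, and_true, Finset.mem_range] at ha ⊢
    exact ⟨fun h => ha (Fin.val_injective h), a.isLt⟩
  · intro a _ b _ h
    exact Fin.val_injective h
  · intro m hm
    simp only [Finset.mem_erase, Finset.mem_range] at hm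
    exact ⟨⟨m, hm.2⟩, by simp [Finset.mem_erase, Fin.ext_iff, hm.1], rfl⟩
  · intro a _; rfl

lemma curry (d : ℕ) (f : (Fin d → ℝ) → ℝ) (p : Fin d → ℕ) (k₀ : Fin d) (z : Fin d → ℕ → ℝ) :
    mvDivDiff f p (fun k j => z k (j : ℕ)) =
    ∑ m ∈ Finset.range (p k₀ + 1),
      psiAux f k₀ (fun k => p k.1) z (z k₀ m) /
        ∏ m' ∈ (Finset.range (p k₀ + 1)).erase m, (z k₀ m - z k₀ m') := by
  rw [mvDivDiff]
  rw [← Equiv.sum_comp (Equiv.piSplitAt k₀ fun k => Fin (p k + 1)).symm]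
  rw [Fintype.sum_prod_type]
  rw [← Fin.sum_univ_eq_sum_range (fun m => psiAux f k₀ (fun k => p k.1) z (z k₀ m) /
        ∏ m' ∈ (Finset.range (p k₀ + 1)).erase m, (z k₀ m - z k₀ m'))]
  refine Finset.sum_congr rfl fun j _ => ?_
  rw [psiAux, Finset.sum_div]
  refine Finset.sum_congr rfl fun g _ => ?_
  set i := (Equiv.piSplitAt k₀ fun k => Fin (p k + 1)).symm (j, g) with hi
  have hik : i k₀ = j := by
    rw [hi]; simp [Equiv.piSplitAt_symm_apply]
  have hik' : ∀ k (h : k ≠ k₀), i k = g ⟨k, h⟩ := by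
    intro k h; rw [hi]; simp [Equiv.piSplitAt_symm_apply, h]
  rw [div_div]
  congr 1
  · congr 1
    funext k
    by_cases h : k = k₀
    · subst h; rw [hik]; simp
    · rw [hik' k h]; simp [h]
  · rw [← Finset.mul_prod_erase Finset.univ _ (Finset.mem_univ k₀), mul_comm]
    congr 1
    · rw [Finset.prod_subtype (p := fun k => k ≠ k₀) (Finset.univ.erase k₀) (fun k => by simp)
        (fun k => ∏ j' ∈ Finset.univ.erase (i k), (z k (i k : ℕ) - z k (j' : ℕ)))]
      refine Finset.prod_congr rfl fun k _ => ?_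
      rw [hik' k.1 k.2]
    · rw [hik, ← erase_prod (fun m' => z k₀ (j : ℕ) - z k₀ m') j]

lemma psiAux_congr {d : ℕ} (f : (Fin d → ℝ) → ℝ) (k₀ : Fin d)
    {q q' : {k : Fin d // k ≠ k₀} → ℕ} {z z' : Fin d → ℕ → ℝ} (u : ℝ)
    (hq : ∀ k, q k = q' k) (hz : ∀ k : Fin d, k ≠ k₀ → z k = z' k) :
    psiAux f k₀ q z u = psiAux f k₀ q' z' u := by
  have hq' : q = q' := funext hq
  subst hq'
  rw [psiAux, psiAux]
  refine Finset.sum_congr rfl fun g _ => ?_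
  congr 1
  · congr 1
    funext k
    by_cases h : k = k₀
    · simp [h]
    · simp only [dif_neg h, hz k h]
  · refine Finset.prod_congr rfl fun k _ => ?_
    rw [hz k.1 k.2]

lemma curry_one (d : ℕ) (f : (Fin d → ℝ) → ℝ) (p : Fin d → ℕ) (k₀ : Fin d)
    (hp : p k₀ = 1) (z : Fin d → ℕ → ℝ) :
    mvDivDiff f p (fun k j => z k (j : ℕ)) =
    psiAux f k₀ (fun k => p k.1) z (z k₀ 0) / (z k₀ 0 - z k₀ 1) +
    psiAux f k₀ (fun k => p k.1) z (z k₀ 1) / (z k₀ 1 - z k₀ 0) := by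
  rw [curry d f p k₀ z, hp]
  have e0 : (Finset.range 2).erase 0 = {1} := rfl
  have e1 : (Finset.range 2).erase 1 = {0} := rfl
  rw [Finset.sum_range_succ, Finset.sum_range_succ, Finset.sum_range_zero, e0, e1]
  simp

lemma curry_two (d : ℕ) (f : (Fin d → ℝ) → ℝ) (p : Fin d → ℕ) (k₀ : Fin d)
    (hp : p k₀ = 2) (z : Fin d → ℕ → ℝ) :
    mvDivDiff f p (fun k j => z k (j : ℕ)) =
    psiAux f k₀ (fun k => p k.1) z (z k₀ 0) / ((z k₀ 0 - z k₀ 1) * (z k₀ 0 - z k₀ 2)) +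
    psiAux f k₀ (fun k => p k.1) z (z k₀ 1) / ((z k₀ 1 - z k₀ 0) * (z k₀ 1 - z k₀ 2)) +
    psiAux f k₀ (fun k => p k.1) z (z k₀ 2) / ((z k₀ 2 - z k₀ 0) * (z k₀ 2 - z k₀ 1)) := by
  rw [curry d f p k₀ z, hp]
  have e0 : (Finset.range 3).erase 0 = {1, 2} := rfl
  have e1 : (Finset.range 3).erase 1 = {0, 2} := rfl
  have e2 : (Finset.range 3).erase 2 = {0, 1} := rfl
  rw [Finset.sum_range_succ, Finset.sum_range_succ, Finset.sum_range_succ,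
    Finset.sum_range_zero, e0, e1, e2]
  rw [Finset.prod_insert (by decide), Finset.prod_insert (by decide),
    Finset.prod_insert (by decide)]
  simp

lemma slope_anti (Ψ : ℝ → ℝ)
    (h : ∀ α β γ : ℝ, 0 ≤ α → α < β → β < γ → γ ≤ 1 →
      Ψ α / ((α - β) * (α - γ)) + Ψ β / ((β - α) * (β - γ)) +
        Ψ γ / ((γ - α) * (γ - β)) ≤ 0)
    (a b A B : ℝ) (ha : 0 ≤ a) (haA : a ≤ A) (hab : a < b) (hbB : b ≤ B)
    (hAB : A < B) (hB : B ≤ 1) :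
    (Ψ B - Ψ A) / (B - A) ≤ (Ψ b - Ψ a) / (b - a) := by
  have haB : a < B := lt_of_le_of_lt haA hAB
  have hstep1 : (Ψ B - Ψ A) / (B - A) ≤ (Ψ B - Ψ a) / (B - a) := by
    rcases eq_or_lt_of_le haA with rfl | hlt
    · exact le_refl _
    · have hT := h a A B ha hlt hAB hB
      have h1 : B - A ≠ 0 := sub_ne_zero.mpr (ne_of_gt hAB)
      have h2 : B - a ≠ 0 := sub_ne_zero.mpr (ne_of_gt haB)
      have h3 : A - a ≠ 0 := sub_ne_zero.mpr (ne_of_gt hlt)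
      have h4 : a - A ≠ 0 := sub_ne_zero.mpr (ne_of_lt hlt)
      have h5 : a - B ≠ 0 := sub_ne_zero.mpr (ne_of_lt haB)
      have h6 : A - B ≠ 0 := sub_ne_zero.mpr (ne_of_lt hAB)
      have key : (Ψ B - Ψ A) / (B - A) - (Ψ B - Ψ a) / (B - a) =
          (A - a) * (Ψ a / ((a - A) * (a - B)) + Ψ A / ((A - a) * (A - B)) +
            Ψ B / ((B - a) * (B - A))) := by
        field_simp
        ring
      nlinarith [mul_nonpos_of_nonneg_of_nonpos (le_of_lt (sub_pos.mpr hlt)) hT]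
  have hstep2 : (Ψ B - Ψ a) / (B - a) ≤ (Ψ b - Ψ a) / (b - a) := by
    rcases eq_or_lt_of_le hbB with rfl | hlt
    · exact le_refl _
    · have hT := h a b B ha hab hlt hB
      have h1 : b - a ≠ 0 := sub_ne_zero.mpr (ne_of_gt hab)
      have h2 : B - a ≠ 0 := sub_ne_zero.mpr (ne_of_gt haB)
      have h3 : B - b ≠ 0 := sub_ne_zero.mpr (ne_of_gt hlt)
      have h4 : a - b ≠ 0 := sub_ne_zero.mpr (ne_of_lt hab)
      have h5 : a - B ≠ 0 := sub_ne_zero.mpr (ne_of_lt haB)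
      have h6 : b - B ≠ 0 := sub_ne_zero.mpr (ne_of_lt hlt)
      have key : (Ψ B - Ψ a) / (B - a) - (Ψ b - Ψ a) / (b - a) =
          (B - b) * (Ψ a / ((a - b) * (a - B)) + Ψ b / ((b - a) * (b - B)) +
            Ψ B / ((B - a) * (B - b))) := by
        field_simp
        ring
      nlinarith [mul_nonpos_of_nonneg_of_nonpos (le_of_lt (sub_pos.mpr hlt)) hT]
  linarith

lemma strictMono_fin_of {n : ℕ} (w : ℕ → ℝ) (h : ∀ m, m + 1 < n → w m < w (m + 1)) :
    StrictMono (fun j : Fin n => w (j : ℕ)) := by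
  have key : ∀ m₂, m₂ < n → ∀ m₁, m₁ < m₂ → w m₁ < w m₂ := by
    intro m₂
    induction m₂ with
    | zero => intro _ m₁ h'; omega
    | succ m ih =>
      intro hm₂ m₁ h'
      rcases Nat.lt_succ_iff_lt_or_eq.mp h' with h'' | rfl
      · exact lt_trans (ih (by omega) m₁ h'') (h m hm₂)
      · exact h m₁ hm₂
  intro i j hij
  exact key (j : ℕ) j.isLt (i : ℕ) hij


lemma single_move (d : ℕ) (f : (Fin d → ℝ) → ℝ) (hf : MemTCP d f)
    (S : Finset (Fin d)) (k₀ : Fin d) (hk₀ : k₀ ∈ S)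
    (y1 y2 : Fin d → ℝ) (A B : ℝ)
    (hbase : ∀ k ∈ S, 0 ≤ y1 k ∧ y1 k < y2 k ∧ y2 k ≤ 1)
    (hout : ∀ k ∉ S, y1 k ∈ Set.Icc (0 : ℝ) 1)
    (hA : y1 k₀ ≤ A) (hB : y2 k₀ ≤ B) (hAB : A < B) (hB1 : B ≤ 1) :
    mvDivDiff f (fun k => if k ∈ S then 1 else 0)
        (fun k j => if (j : ℕ) = 0 then Function.update y1 k₀ A k
          else Function.update y2 k₀ B k) ≤
      mvDivDiff f (fun k => if k ∈ S then 1 else 0)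
        (fun k j => if (j : ℕ) = 0 then y1 k else y2 k) := by
  classical
  set p₁ : Fin d → ℕ := fun k => if k ∈ S then 1 else 0 with hp₁
  have hp₁k₀ : p₁ k₀ = 1 := if_pos hk₀
  set z : Fin d → ℕ → ℝ := fun k n => if n = 0 then y1 k else y2 k with hz
  set z' : Fin d → ℕ → ℝ := fun k n =>
    if n = 0 then Function.update y1 k₀ A k else Function.update y2 k₀ B k with hz'
  set q : {k : Fin d // k ≠ k₀} → ℕ := fun k => p₁ k.1 with hq
  set Ψ : ℝ → ℝ := fun u => psiAux f k₀ q z u with hΨ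
  have hab : y1 k₀ < y2 k₀ := (hbase k₀ hk₀).2.1
  have ha0 : 0 ≤ y1 k₀ := (hbase k₀ hk₀).1
  -- rewrite both sides as slopes of Ψ
  have hzz' : ∀ k : Fin d, k ≠ k₀ → z' k = z k := by
    intro k hk
    funext n
    simp [hz, hz', Function.update_of_ne hk]
  have hL : mvDivDiff f p₁ (fun k j => z' k (j : ℕ)) = Ψ A / (A - B) + Ψ B / (B - A) := by
    rw [curry_one d f p₁ k₀ hp₁k₀ z']
    have hA' : z' k₀ 0 = A := by simp [hz']
    have hB' : z' k₀ 1 = B := by simp [hz']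
    rw [hA', hB']
    congr 2 <;> exact psiAux_congr f k₀ _ (fun k => rfl) hzz'
  have hR : mvDivDiff f p₁ (fun k j => z k (j : ℕ)) =
      Ψ (y1 k₀) / (y1 k₀ - y2 k₀) + Ψ (y2 k₀) / (y2 k₀ - y1 k₀) := by
    rw [curry_one d f p₁ k₀ hp₁k₀ z]
    rfl
  -- the triple inequality from total concavity
  have htriple : ∀ α β γ : ℝ, 0 ≤ α → α < β → β < γ → γ ≤ 1 →
      Ψ α / ((α - β) * (α - γ)) + Ψ β / ((β - α) * (β - γ)) +
        Ψ γ / ((γ - α) * (γ - β)) ≤ 0 := by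
    intro α β γ hα hαβ hβγ hγ
    set p₂ : Fin d → ℕ := fun k => if k = k₀ then 2 else p₁ k with hp₂
    have hp₂k₀ : p₂ k₀ = 2 := if_pos rfl
    set z₂ : Fin d → ℕ → ℝ := fun k n =>
      if k = k₀ then (if n = 0 then α else if n = 1 then β else γ) else z k n with hz₂
    have hmain : mvDivDiff f p₂ (fun k j => z₂ k (j : ℕ)) ≤ 0 := by
      apply hf p₂
      · intro k
        by_cases h : k = k₀ <;> by_cases h' : k ∈ S <;> simp [hp₂, hp₁, h, h']
      · exact ⟨k₀, hp₂k₀⟩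
      · intro k
        apply strictMono_fin_of
        intro m hm
        by_cases h : k = k₀
        · subst h
          rw [hp₂k₀] at hm
          have hm2 : m = 0 ∨ m = 1 := by omega
          rcases hm2 with rfl | rfl <;> simp [hz₂] <;> linarith
        · rw [show p₂ k = p₁ k from if_neg h] at hm
          have hkS : k ∈ S := by
            by_contra hk
            rw [hp₁] at hm; simp [hk] at hm
          have h1 : p₁ k = 1 := if_pos hkS
          rw [h1] at hm
          have : m = 0 := by omega
          subst this
          simp [hz₂, h, hz]
          exact (hbase k hkS).2.1
      · intro k j
        have hjlt := j.isLt
        by_cases h : k = k₀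
        · subst h
          simp only [hz₂, if_pos rfl]
          split_ifs <;> constructor <;> linarith
        · simp only [hz₂, if_neg h, hz]
          by_cases hkS : k ∈ S
          · split_ifs
            · exact ⟨(hbase k hkS).1, le_trans (le_of_lt (hbase k hkS).2.1) (hbase k hkS).2.2⟩
            · exact ⟨le_trans (hbase k hkS).1 (le_of_lt (hbase k hkS).2.1), (hbase k hkS).2.2⟩
          · have hp0 : p₂ k = 0 := by simp [hp₂, hp₁, h, hkS]
            have hj0 : (j : ℕ) = 0 := by omega
            rw [hj0]
            simpa using hout k hkS
    rw [curry_two d f p₂ k₀ hp₂k₀ z₂] at hmain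
    have h0 : z₂ k₀ 0 = α := by simp [hz₂]
    have h1 : z₂ k₀ 1 = β := by simp [hz₂]
    have h2 : z₂ k₀ 2 = γ := by simp [hz₂]
    rw [h0, h1, h2] at hmain
    have hps : ∀ u, psiAux f k₀ (fun k => p₂ k.1) z₂ u = Ψ u := by
      intro u
      exact psiAux_congr f k₀ u (fun k => by simp [hp₂, if_neg k.2, hq])
        (fun k hk => by funext n; simp [hz₂, if_neg hk])
    rw [hps, hps, hps] at hmain
    exact hmain
  -- apply the 1-d slope monotonicity
  have hslope := slope_anti Ψ htriple (y1 k₀) (y2 k₀) A B ha0 hA hab hB hAB hB1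
  have hEL : mvDivDiff f p₁
      (fun k j => if (j : ℕ) = 0 then Function.update y1 k₀ A k
        else Function.update y2 k₀ B k) = Ψ A / (A - B) + Ψ B / (B - A) := hL
  have hER : mvDivDiff f p₁ (fun k j => if (j : ℕ) = 0 then y1 k else y2 k) =
      Ψ (y1 k₀) / (y1 k₀ - y2 k₀) + Ψ (y2 k₀) / (y2 k₀ - y1 k₀) := hR
  rw [hEL, hER]
  have htr : ∀ u v x y : ℝ, x < y → u / (x - y) + v / (y - x) = (v - u) / (y - x) := by
    intro u v x y hxy
    have : x - y ≠ 0 := sub_ne_zero.mpr (ne_of_lt hxy)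
    have : y - x ≠ 0 := sub_ne_zero.mpr (ne_of_gt hxy)
    field_simp
    ring
  rw [htr _ _ _ _ hAB, htr _ _ _ _ hab]
  exact hslope


/-- **Lemma (monotonicity of divided differences of order `1_S` for `f ∈ F^d_TCP`).**
For `f ∈ F^d_TCP` and nonempty `S ⊆ [d]`, the divided difference of order `1_S`
decreases when the point configuration increases coordinate-wise on `S`, keeping the
coordinates outside `S` fixed. -/
theorem divided_difference_monotone_general (d : ℕ) (f : (Fin d → ℝ) → ℝ)
    (hf : MemTCP d f) (S : Finset (Fin d)) (hS : S.Nonempty)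
    (v1 v2 w1 w2 : Fin d → ℝ)
    (h1 : ∀ k ∈ S, 0 ≤ v1 k ∧ v1 k ≤ w1 k ∧ w1 k ≤ 1)
    (h2 : ∀ k ∈ S, 0 ≤ v2 k ∧ v2 k ≤ w2 k ∧ w2 k ≤ 1)
    (h3 : ∀ k ∈ S, v1 k < v2 k) (h4 : ∀ k ∈ S, w1 k < w2 k)
    (h5 : ∀ k ∉ S, v1 k = w1 k ∧ v1 k ∈ Set.Icc (0 : ℝ) 1) :
    mvDivDiff f (fun k => if k ∈ S then 1 else 0)
        (fun k j => if (j : ℕ) = 0 then w1 k else w2 k) ≤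
      mvDivDiff f (fun k => if k ∈ S then 1 else 0)
        (fun k j => if (j : ℕ) = 0 then v1 k else v2 k) := by
  classical
  have key : ∀ T : Finset (Fin d), T ⊆ S →
      mvDivDiff f (fun k => if k ∈ S then 1 else 0)
        (fun k j => if (j : ℕ) = 0 then (if k ∈ T then w1 k else v1 k)
          else (if k ∈ T then w2 k else v2 k)) ≤
      mvDivDiff f (fun k => if k ∈ S then 1 else 0)
        (fun k j => if (j : ℕ) = 0 then v1 k else v2 k) := by
    intro T
    induction T using Finset.induction_on with
    | empty => intro _; simp
    | @insert a T ha ih =>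
      intro hsub
      have haS : a ∈ S := hsub (Finset.mem_insert_self a T)
      have hTS : T ⊆ S := fun x hx => hsub (Finset.mem_insert_of_mem hx)
      have haT : a ∉ T := ha
      have hcfg : (fun (k : Fin d) (j : Fin ((if k ∈ S then 1 else 0) + 1)) =>
          if (j : ℕ) = 0 then (if k ∈ insert a T then w1 k else v1 k)
            else (if k ∈ insert a T then w2 k else v2 k)) =
          (fun (k : Fin d) (j : Fin ((if k ∈ S then 1 else 0) + 1)) => if (j : ℕ) = 0 then
              Function.update (fun k => if k ∈ T then w1 k else v1 k) a (w1 a) k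
            else Function.update (fun k => if k ∈ T then w2 k else v2 k) a (w2 a) k) := by
        funext k j
        by_cases h : k = a
        · subst h; simp [Finset.mem_insert_self]
        · simp [Function.update_of_ne h, Finset.mem_insert, h]
      rw [hcfg]
      refine le_trans (single_move d f hf S a haS
        (fun k => if k ∈ T then w1 k else v1 k) (fun k => if k ∈ T then w2 k else v2 k)
        (w1 a) (w2 a) ?_ ?_ ?_ ?_ ?_ ?_) (ih hTS)
      · intro k hk
        by_cases hkT : k ∈ T <;> simp only [hkT, if_true, if_false]
        · exact ⟨le_trans (h1 k hk).1 (h1 k hk).2.1, h4 k hk, (h2 k hk).2.2⟩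
        · exact ⟨(h1 k hk).1, h3 k hk, le_trans (h2 k hk).2.1 (h2 k hk).2.2⟩
      · intro k hk
        have hkT : k ∉ T := fun h => hk (hTS h)
        simp only [hkT, if_false]
        exact (h5 k hk).2
      · simp only [haT, if_false]
        exact (h1 a haS).2.1
      · simp only [haT, if_false]
        exact (h2 a haS).2.1
      · exact h4 a haS
      · exact (h2 a haS).2.2
  have hfin := key S (le_refl S)
  have hcfg : (fun (k : Fin d) (j : Fin ((if k ∈ S then 1 else 0) + 1)) =>
      if (j : ℕ) = 0 then (if k ∈ S then w1 k else v1 k)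
        else (if k ∈ S then w2 k else v2 k)) =
      (fun (k : Fin d) (j : Fin ((if k ∈ S then 1 else 0) + 1)) =>
        if (j : ℕ) = 0 then w1 k else w2 k) := by
    funext k j
    by_cases hk : k ∈ S
    · simp [hk]
    · have hj0 : (j : ℕ) = 0 := by
        have hlt := j.isLt
        simp only [hk, if_false] at hlt
        omega
      simp [hj0, hk, (h5 k hk).1]
  rw [hcfg] at hfin
  exact hfin

end
end

section
/- There exists a constant C_d depending only on d with the following property. Let V, t > 0 and let f : [0,1]^d → ℝ be of the form f(x) = β_∅ + Σ_{S⊆[d],1≤|S|≤s} β_S Π_{j∈S} x_j − Σ_{S⊆[d],1≤|S|≤s} ∫_{[0,1)^{|S|}∖{0}} Π_{j∈S}(x_j − t_j)_+ dν_S(t_j, j∈S), where the ν_S are finite Borel measures with Σ_{S:1≤|S|≤s} ν_S([0,1)^{|S|}∖{0}) ≤ V, and suppose ‖f‖_2 ≤ t with ‖f‖_2 the L² norm on [0,1]^d. Then for every subset T ⊆ [d] with |T| ≤ s (including T = ∅), the coefficient satisfies |β_T| ≤ C_d (V + t). -/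
open MeasureTheory ProbabilityTheory

noncomputable section

/-!
Write `f = P - H`, where `P` is the multilinear polynomial with coefficients `β_S`
(`β_∅ = β₀`) and `H ≥ 0` is the hinge part; on the cube `H ≤ V`, because every hinge product
lies in `[0,1]` on the support of `ν_S`. The product `Φ_T` of coordinatewise dual affine
functions satisfies `∫ z^S Φ_T = δ_{ST}` and `|Φ_T| ≤ 6^d`, so
`β_T = ∫ P Φ_T = ∫ f Φ_T + ∫ H Φ_T`, with `|∫ f Φ_T| ≤ 6^d ‖f‖₁ ≤ 6^d ‖f‖₂ ≤ 6^d t` and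
`|∫ H Φ_T| ≤ 6^d V`.
-/

section UnitCube

variable {ι : Type*} [Fintype ι]

lemma measurableSet_unitCube : MeasurableSet (unitCube ι) :=
  .univ_pi fun _ => measurableSet_Icc

omit [Fintype ι] in
lemma isCompact_unitCube : IsCompact (unitCube ι) :=
  isCompact_univ_pi fun _ => isCompact_Icc

lemma volume_restrict_unitCube :
    volume.restrict (unitCube ι) = Measure.pi fun _ => volume.restrict (Set.Icc (0 : ℝ) 1) := by
  rw [unitCube, volume_pi, Measure.restrict_pi_pi]

instance : IsProbabilityMeasure (volume.restrict (unitCube ι)) := by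
  have : IsProbabilityMeasure (volume.restrict (Set.Icc (0 : ℝ) 1)) := ⟨by simp⟩
  rw [volume_restrict_unitCube]
  infer_instance

lemma integral_unitCube_prod (g : ι → ℝ → ℝ) :
    ∫ z in unitCube ι, ∏ k, g k (z k) = ∏ k, ∫ u in Set.Icc (0 : ℝ) 1, g k u := by
  rw [volume_restrict_unitCube, integral_fintype_prod_eq_prod]

end UnitCube

lemma integral_unitInterval_quadratic {f : ℝ → ℝ} (a b c : ℝ)
    (hf : ∀ u, f u = a * u ^ 2 + b * u + c) :
    ∫ u in (0 : ℝ)..1, f u = a / 3 + b / 2 + c := by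
  have hint : ∀ g : ℝ → ℝ, Continuous g → IntervalIntegrable g volume 0 1 :=
    fun g hg => hg.intervalIntegrable 0 1
  simp_rw [hf]
  rw [intervalIntegral.integral_add (hint _ (by fun_prop)) (hint _ (by fun_prop)),
    intervalIntegral.integral_add (hint _ (by fun_prop)) (hint _ (by fun_prop)),
    intervalIntegral.integral_const_mul, intervalIntegral.integral_const_mul, integral_pow,
    integral_id, intervalIntegral.integral_const]
  norm_num
  ring

lemma integral_Icc_monomial_mul_dual (p q : Prop) [Decidable p] [Decidable q] :
    ∫ u in Set.Icc (0 : ℝ) 1, (if p then u else 1) * (if q then 12 * u - 6 else 4 - 6 * u)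
      = if (p ↔ q) then 1 else 0 := by
  rw [integral_Icc_eq_integral_Ioc, ← intervalIntegral.integral_of_le zero_le_one]
  by_cases hp : p <;> by_cases hq : q <;> simp only [hp, hq, if_true, if_false, iff_true,
    iff_false, not_true, one_mul]
  · exact (integral_unitInterval_quadratic 12 (-6) 0 fun u => by ring).trans (by norm_num)
  · exact (integral_unitInterval_quadratic (-6) 4 0 fun u => by ring).trans (by norm_num)
  · exact (integral_unitInterval_quadratic 0 12 (-6) fun u => by ring).trans (by norm_num)
  · exact (integral_unitInterval_quadratic 0 (-6) 4 fun u => by ring).trans (by norm_num)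

section CoeffTest

variable {ι : Type*} [Fintype ι] [DecidableEq ι]

/-- `u ↦ 12u - 6` and `u ↦ 4 - 6u` are the basis of affine functions `L²[0,1]`-dual to
`{u, 1}`. -/
def coeffTest (T : Finset ι) (z : ι → ℝ) : ℝ :=
  ∏ k, if k ∈ T then 12 * z k - 6 else 4 - 6 * z k

lemma continuous_coeffTest (T : Finset ι) : Continuous (coeffTest T) := by
  refine continuous_finsetProd _ fun k _ => ?_
  split_ifs <;> fun_prop

lemma abs_coeffTest_le (T : Finset ι) {z : ι → ℝ} (hz : z ∈ unitCube ι) :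
    |coeffTest T z| ≤ 6 ^ Fintype.card ι := by
  rw [coeffTest, Finset.abs_prod, ← Finset.card_univ, ← Finset.prod_const]
  refine Finset.prod_le_prod (fun k _ => abs_nonneg _) fun k _ => ?_
  obtain ⟨h0, h1⟩ := hz k (Set.mem_univ k)
  split_ifs <;> rw [abs_le] <;> constructor <;> linarith

lemma integral_prod_mul_coeffTest (S T : Finset ι) :
    ∫ z in unitCube ι, (∏ j ∈ S, z j) * coeffTest T z = if S = T then 1 else 0 := by
  have hsplit : ∀ z : ι → ℝ, (∏ j ∈ S, z j) * coeffTest T z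
      = ∏ k, (if k ∈ S then z k else 1) * (if k ∈ T then 12 * z k - 6 else 4 - 6 * z k) := by
    intro z
    rw [Finset.prod_mul_distrib, coeffTest, Finset.prod_ite_mem, Finset.univ_inter]
  simp_rw [hsplit]
  rw [integral_unitCube_prod fun k u =>
    (if k ∈ S then u else 1) * (if k ∈ T then 12 * u - 6 else 4 - 6 * u)]
  simp_rw [integral_Icc_monomial_mul_dual]
  simp [Finset.prod_boole, ← Finset.ext_iff]

lemma integral_multilinear_mul_coeffTest (𝒮 : Finset (Finset ι)) (c : Finset ι → ℝ)
    (T : Finset ι) :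
    ∫ z in unitCube ι, (∑ S ∈ 𝒮, c S * ∏ j ∈ S, z j) * coeffTest T z
      = if T ∈ 𝒮 then c T else 0 := by
  simp_rw [Finset.sum_mul, mul_assoc]
  rw [integral_finsetSum _ fun S _ => ContinuousOn.integrableOn_compact isCompact_unitCube
    (by have := continuous_coeffTest T; fun_prop)]
  simp_rw [integral_const_mul, integral_prod_mul_coeffTest, mul_ite, mul_one, mul_zero,
    Finset.sum_ite_eq']

end CoeffTest

lemma integral_abs_le_of_integral_sq_le {α : Type*} [MeasurableSpace α] {μ : Measure α}
    [IsProbabilityMeasure μ] {f : α → ℝ} {t : ℝ} (hf : Integrable (fun x => f x ^ 2) μ)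
    (ht : 0 < t) (h : ∫ x, f x ^ 2 ∂μ ≤ t ^ 2) :
    ∫ x, |f x| ∂μ ≤ t := by
  have amgm : ∀ x, |f x| ≤ t / 2 + f x ^ 2 / (2 * t) := fun x => by
    rw [div_add_div _ _ two_ne_zero (by positivity), le_div_iff₀ (by positivity)]
    nlinarith [sq_nonneg (|f x| - t), sq_abs (f x)]
  calc ∫ x, |f x| ∂μ ≤ ∫ x, (t / 2 + f x ^ 2 / (2 * t)) ∂μ :=
        integral_mono_of_nonneg (.of_forall fun x => abs_nonneg _)
          ((integrable_const _).add (hf.div_const _)) (.of_forall amgm)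
    _ = t / 2 + (∫ x, f x ^ 2 ∂μ) / (2 * t) := by
        rw [integral_add (integrable_const _) (hf.div_const _), integral_const, integral_div]
        simp
    _ ≤ t / 2 + t ^ 2 / (2 * t) := by gcongr
    _ = t := by field_simp; ring

lemma empty_notMem_smallSets (d s : ℕ) : ∅ ∉ smallSets d s := by
  simp [smallSets]

namespace TCRep

variable {d : ℕ} (s : ℕ) (r : TCRep d)

def coeff : Finset (Fin d) → ℝ := Function.update r.β ∅ r.β0

def polyPart (z : Fin d → ℝ) : ℝ :=
  ∑ S ∈ insert ∅ (smallSets d s), r.coeff S * ∏ j ∈ S, z j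

def hingePart (z : Fin d → ℝ) : ℝ :=
  ∑ S ∈ smallSets d s, ∫ t, (∏ j ∈ S, max (z j - t j) 0) ∂(r.ν S)

lemma toFun_eq_polyPart_sub_hingePart : r.toFun s = r.polyPart s - r.hingePart s := by
  ext z
  rw [toFun, Pi.sub_apply, polyPart, hingePart, Finset.sum_insert (empty_notMem_smallSets d s)]
  congr 2
  · simp [coeff]
  · refine Finset.sum_congr rfl fun S hS => ?_
    rw [coeff, Function.update_of_ne (ne_of_mem_of_not_mem hS (empty_notMem_smallSets d s))]

lemma continuous_polyPart : Continuous (r.polyPart s) := by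
  unfold polyPart
  fun_prop

lemma stronglyMeasurable_hingePart : StronglyMeasurable (r.hingePart s) := by
  refine Finset.stronglyMeasurable_fun_sum _ fun S _ => ?_
  have := r.finite S
  exact (show Continuous fun p : (Fin d → ℝ) × (Fin d → ℝ) => ∏ j ∈ S, max (p.1 j - p.2 j) 0
    by fun_prop).stronglyMeasurable.integral_prod_right'

lemma hingePart_nonneg (z : Fin d → ℝ) : 0 ≤ r.hingePart s z :=
  Finset.sum_nonneg fun _ _ =>
    integral_nonneg fun _ => Finset.prod_nonneg fun _ _ => le_max_right _ _

lemma hingePart_le_V {z : Fin d → ℝ} (hz : z ∈ unitCube (Fin d)) :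
    r.hingePart s z ≤ r.V s := by
  refine Finset.sum_le_sum fun S _ => ?_
  have := r.finite S
  have hle : ∀ᵐ t ∂(r.ν S), ‖∏ j ∈ S, max (z j - t j) 0‖ ≤ 1 := by
    filter_upwards [mem_ae_iff.2 (r.support S)] with t ht
    rw [Real.norm_eq_abs, abs_of_nonneg (Finset.prod_nonneg fun j _ => le_max_right _ _)]
    refine Finset.prod_le_one (fun j _ => le_max_right _ _) fun j hj => ?_
    have := (ht.1 j hj).1
    have := (hz j (Set.mem_univ j)).2
    exact max_le (by linarith) zero_le_one
  simpa [measureReal_def] using (le_abs_self _).trans (norm_integral_le_of_norm_le_const hle)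

lemma norm_hingePart_le {z : Fin d → ℝ} (hz : z ∈ unitCube (Fin d)) :
    ‖r.hingePart s z‖ ≤ r.V s := by
  rw [Real.norm_eq_abs, abs_of_nonneg (r.hingePart_nonneg s z)]
  exact r.hingePart_le_V s hz

lemma memLp_toFun (p : ENNReal) : MemLp (r.toFun s) p (volume.restrict (unitCube (Fin d))) := by
  obtain ⟨B, hB⟩ := isCompact_unitCube.exists_bound_of_continuousOn
    (r.continuous_polyPart s).continuousOn
  rw [toFun_eq_polyPart_sub_hingePart]
  refine (memLp_top_of_bound ((r.continuous_polyPart s).aestronglyMeasurable.sub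
    (r.stronglyMeasurable_hingePart s).aestronglyMeasurable) (B + r.V s) ?_).mono_exponent le_top
  filter_upwards [ae_restrict_mem measurableSet_unitCube] with z hz
  exact (norm_sub_le _ _).trans (add_le_add (hB z hz) (r.norm_hingePart_le s hz))

lemma integrable_hingePart : Integrable (r.hingePart s) (volume.restrict (unitCube (Fin d))) := by
  refine .of_bound (r.stronglyMeasurable_hingePart s).aestronglyMeasurable (r.V s) ?_
  filter_upwards [ae_restrict_mem measurableSet_unitCube] using fun z hz => r.norm_hingePart_le s hz

lemma abs_integral_hingePart_mul_le {φ : (Fin d → ℝ) → ℝ} {M : ℝ}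
    (hφ : ∀ z ∈ unitCube (Fin d), |φ z| ≤ M) :
    |∫ z in unitCube (Fin d), r.hingePart s z * φ z| ≤ M * r.V s := by
  have hle : ∀ᵐ z ∂(volume.restrict (unitCube (Fin d))),
      ‖r.hingePart s z * φ z‖ ≤ M * r.V s := by
    filter_upwards [ae_restrict_mem measurableSet_unitCube] with z hz
    rw [Real.norm_eq_abs, abs_mul, abs_of_nonneg (r.hingePart_nonneg s z), mul_comm M]
    exact mul_le_mul (r.hingePart_le_V s hz) (hφ z hz) (abs_nonneg _)
      ((r.hingePart_nonneg s z).trans (r.hingePart_le_V s hz))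
  simpa using norm_integral_le_of_norm_le_const hle

lemma abs_integral_toFun_mul_le {φ : (Fin d → ℝ) → ℝ} {M t : ℝ}
    (hφ : ∀ z ∈ unitCube (Fin d), |φ z| ≤ M) (ht : 0 < t)
    (hL2 : ∫ z in unitCube (Fin d), r.toFun s z ^ 2 ≤ t ^ 2) :
    |∫ z in unitCube (Fin d), r.toFun s z * φ z| ≤ M * t := by
  have hM : 0 ≤ M := (abs_nonneg _).trans (hφ 0 fun _ _ => ⟨le_rfl, zero_le_one⟩)
  have hbound : ∀ᵐ z ∂(volume.restrict (unitCube (Fin d))),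
      ‖r.toFun s z * φ z‖ ≤ M * |r.toFun s z| := by
    filter_upwards [ae_restrict_mem measurableSet_unitCube] with z hz
    rw [Real.norm_eq_abs, abs_mul, mul_comm]
    exact mul_le_mul_of_nonneg_right (hφ z hz) (abs_nonneg _)
  calc |∫ z in unitCube (Fin d), r.toFun s z * φ z|
      ≤ ∫ z in unitCube (Fin d), M * |r.toFun s z| :=
        norm_integral_le_of_norm_le (((r.memLp_toFun s 1).integrable le_rfl).abs.const_mul M)
          hbound
    _ = M * ∫ z in unitCube (Fin d), |r.toFun s z| := integral_const_mul _ _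
    _ ≤ M * t := mul_le_mul_of_nonneg_left
        (integral_abs_le_of_integral_sq_le (r.memLp_toFun s 2).integrable_sq ht hL2) hM

lemma abs_integral_polyPart_mul_coeffTest_le {t : ℝ} (ht : 0 < t)
    (hL2 : ∫ z in unitCube (Fin d), r.toFun s z ^ 2 ≤ t ^ 2) (T : Finset (Fin d)) :
    |∫ z in unitCube (Fin d), r.polyPart s z * coeffTest T z| ≤ 6 ^ d * (r.V s + t) := by
  have hφ : ∀ z ∈ unitCube (Fin d), |coeffTest T z| ≤ 6 ^ d := fun z hz => by
    simpa using abs_coeffTest_le T hz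
  have hφae : ∀ᵐ z ∂(volume.restrict (unitCube (Fin d))), ‖coeffTest T z‖ ≤ 6 ^ d := by
    filter_upwards [ae_restrict_mem measurableSet_unitCube] using hφ
  have hφm := (continuous_coeffTest T).aestronglyMeasurable
    (μ := volume.restrict (unitCube (Fin d)))
  have hsplit : ∫ z in unitCube (Fin d), r.polyPart s z * coeffTest T z
      = (∫ z in unitCube (Fin d), r.toFun s z * coeffTest T z)
        + ∫ z in unitCube (Fin d), r.hingePart s z * coeffTest T z := by
    rw [← integral_add (((r.memLp_toFun s 1).integrable le_rfl).mul_bdd hφm hφae)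
      ((r.integrable_hingePart s).mul_bdd hφm hφae), toFun_eq_polyPart_sub_hingePart]
    simp only [Pi.sub_apply, sub_mul, sub_add_cancel]
  rw [hsplit]
  calc _ ≤ _ := abs_add_le _ _
    _ ≤ 6 ^ d * t + 6 ^ d * r.V s :=
        add_le_add (r.abs_integral_toFun_mul_le s hφ ht hL2) (r.abs_integral_hingePart_mul_le s hφ)
    _ = 6 ^ d * (r.V s + t) := by ring

lemma integral_polyPart_mul_coeffTest (T : Finset (Fin d)) :
    ∫ z in unitCube (Fin d), r.polyPart s z * coeffTest T z
      = if T ∈ insert ∅ (smallSets d s) then r.coeff T else 0 :=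
  integral_multilinear_mul_coeffTest _ _ T

end TCRep

/-- **Lemma (bound on the multilinear coefficients).**
There is a constant `C_d` depending only on `d` such that for any representation of a
function in `F^{d,s}_TC` with total measure size at most `V` and `L²` norm on the cube
at most `t`, every coefficient `β_T` (including `β_∅ = β₀`) satisfies
`|β_T| ≤ C_d (V + t)`. -/
theorem tc_coefficient_bound (d : ℕ) :
    ∃ C : ℝ, 0 < C ∧
      ∀ s : ℕ, 1 ≤ s → s ≤ d →
      ∀ V t : ℝ, 0 < V → 0 < t →
      ∀ r : TCRep d, r.V s ≤ V →
        (∫ z in unitCube (Fin d), r.toFun s z ^ 2) ≤ t ^ 2 →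
        |r.β0| ≤ C * (V + t) ∧
        ∀ T : Finset (Fin d), 1 ≤ T.card → T.card ≤ s → |r.β T| ≤ C * (V + t) := by
  refine ⟨6 ^ d, by positivity, fun s _ _ V t _ ht r hrV hL2 => ?_⟩
  have hcoeff : ∀ T ∈ insert ∅ (smallSets d s), |r.coeff T| ≤ 6 ^ d * (V + t) := fun T hT => by
    have := r.abs_integral_polyPart_mul_coeffTest_le s ht hL2 T
    rw [r.integral_polyPart_mul_coeffTest, if_pos hT] at this
    exact this.trans (by gcongr)
  refine ⟨by simpa [TCRep.coeff] using hcoeff ∅ (Finset.mem_insert_self _ _), fun T h1 hs => ?_⟩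
  have hT : T ∈ smallSets d s := Finset.mem_filter.2 ⟨Finset.mem_univ _, h1, hs⟩
  simpa [TCRep.coeff, ne_of_mem_of_not_mem hT (empty_notMem_smallSets d s)]
    using hcoeff T (Finset.mem_insert_of_mem hT)
end
end
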